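/- The smallest length n for which a minimal linear code of dimension 3 over F_3 exists is n = 9: no 3-dimensional F_3-linear subspace of F_3^8 is a minimal code, while the 3-dimensional subspace of F_3^9 generated by the rows (0,0,0,0,1,1,1,1,1), (0,1,1,1,0,0,0,1,2), (1,0,1,2,0,1,2,2,2) is a minimal code. -/

import Mathlib

/-- A linear code `C ≤ F₃ⁿ` is minimal if the support of every nonzero codeword is
minimal w.r.t. inclusion among supports of nonzero codewords. -/
def IsMinimalCode {n : ℕ} (C : Submodule (ZMod 3) (Fin n → ZMod 3)) : Prop :=
  ∀ c ∈ C, c ≠ (0 : Fin n → ZMod 3) → ∀ u ∈ C, u ≠ (0 : Fin n → ZMod 3) →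
    {i | u i ≠ 0} ⊆ {i | c i ≠ 0} → {i | u i ≠ 0} = {i | c i ≠ 0}

/-- The `[9,3]₃`-code generated by the three given rows. -/
noncomputable def code9 : Submodule (ZMod 3) (Fin 9 → ZMod 3) :=
  Submodule.span (ZMod 3) ({![0,0,0,0,1,1,1,1,1], ![0,1,1,1,0,0,0,1,2], ![1,0,1,2,0,1,2,2,2]} : Set (Fin 9 → ZMod 3))


abbrev V3 := Fin 3 → ZMod 3

def dot (u x : V3) : ZMod 3 := u 0 * x 0 + u 1 * x 1 + u 2 * x 2

def nrm (x : V3) : V3 :=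
  if x 0 ≠ 0 then x 0 • x else if x 1 ≠ 0 then x 1 • x else x 2 • x

def pts13 : Finset V3 := Finset.univ.filter (fun x => nrm x = x ∧ x ≠ 0)

def enc : Fin 13 → V3 := ![![0,0,1], ![0,1,0], ![0,1,1], ![0,1,2], ![1,0,0], ![1,0,1], ![1,0,2], ![1,1,0], ![1,1,1], ![1,1,2], ![1,2,0], ![1,2,1], ![1,2,2]]

lemma n1 : ∀ x : V3, x ≠ 0 → nrm x ∈ pts13 := by decide
lemma n2 : ∀ (u x : V3), x ≠ 0 → (dot u (nrm x) = 0 ↔ dot u x = 0) := by decide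
lemma e1 : ∀ p q : V3, ∃ v : V3, v ≠ 0 ∧ dot v p = 0 ∧ dot v q = 0 := by decide
lemma dotz : ∀ v : V3, dot v 0 = 0 := by decide

def t (b : Bool) : Nat := cond b 1 0

lemma step_le (a : V3) (s : Finset V3) (p : V3 → Prop) [DecidablePred p] :
    ((insert a s).filter p).card ≤ t (decide (p a)) + (s.filter p).card := by
  rw [Finset.filter_insert]
  split_ifs with h
  · simp only [t, h, decide_eq_true_eq]
    calc (insert a (s.filter p)).card ≤ (s.filter p).card + 1 := Finset.card_insert_le _ _
      _ = t true + (s.filter p).card := by simp [t, Nat.add_comm]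
  · simp [t, h]

lemma sing_le (a : V3) (p : V3 → Prop) [DecidablePred p] :
    (({a} : Finset V3).filter p).card ≤ t (decide (p a)) := by
  rw [Finset.filter_singleton]
  split_ifs with h <;> simp [t, h]

lemma card_le_four {S : Finset V3} {x1 x2 x3 x4 : V3} (h : S ⊆ {x1, x2, x3, x4}) :
    S.card ≤ t (decide (x1 ∈ S)) + t (decide (x2 ∈ S)) + t (decide (x3 ∈ S)) + t (decide (x4 ∈ S)) := by
  have h0 : S.card ≤ (({x1, x2, x3, x4} : Finset V3).filter (· ∈ S)).card :=
    Finset.card_le_card (fun x hx => Finset.mem_filter.mpr ⟨h hx, hx⟩)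
  have h1 := step_le x1 {x2, x3, x4} (· ∈ S)
  have h2 := step_le x2 {x3, x4} (· ∈ S)
  have h3 := step_le x3 {x4} (· ∈ S)
  have h4 := sing_le x4 (· ∈ S)
  omega

lemma step_eq (a : V3) (s : Finset V3) (ha : a ∉ s) (p : V3 → Prop) [DecidablePred p] :
    ((insert a s).filter p).card = t (decide (p a)) + (s.filter p).card := by
  rw [Finset.filter_insert]
  split_ifs with h
  · rw [Finset.card_insert_of_notMem (fun hc => ha (Finset.mem_filter.mp hc).1)]
    simp [t, h, Nat.add_comm]
  · simp [t, h]

lemma sing_eq (a : V3) (p : V3 → Prop) [DecidablePred p] :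
    (({a} : Finset V3).filter p).card = t (decide (p a)) := by
  rw [Finset.filter_singleton]
  split_ifs with h <;> simp [t, h]

lemma tb (j i : Fin 13) (P : Finset V3) (h : dot (enc j) (enc i) = 0) :
    (decide (enc i ∈ P.filter fun x => dot (enc j) x = 0)) = decide (enc i ∈ P) :=
  decide_eq_decide.mpr (by simp [Finset.mem_filter, h])

lemma pts13sub : ∀ x ∈ pts13, x ∈ ({enc 0, enc 1, enc 2, enc 3, enc 4, enc 5, enc 6, enc 7, enc 8, enc 9, enc 10, enc 11, enc 12} : Finset V3) := by decide

set_option maxHeartbeats 1000000 in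
lemma arcB : ∀ b0 b1 b2 b3 b4 b5 b6 b7 b8 b9 b10 b11 b12 : Bool, 2 ≤ t b1 + t b4 + t b7 + t b10 → 2 ≤ t b0 + t b4 + t b5 + t b6 → 2 ≤ t b3 + t b4 + t b9 + t b11 → 2 ≤ t b2 + t b4 + t b8 + t b12 → 2 ≤ t b0 + t b1 + t b2 + t b3 → 2 ≤ t b1 + t b6 + t b9 + t b12 → 2 ≤ t b1 + t b5 + t b8 + t b11 → 2 ≤ t b0 + t b10 + t b11 + t b12 → 2 ≤ t b3 + t b6 + t b8 + t b10 → 2 ≤ t b2 + t b5 + t b9 + t b10 → 2 ≤ t b0 + t b7 + t b8 + t b9 → 2 ≤ t b2 + t b6 + t b7 + t b11 → 2 ≤ t b3 + t b5 + t b7 + t b12 → 9 ≤ t b0 + t b1 + t b2 + t b3 + t b4 + t b5 + t b6 + t b7 + t b8 + t b9 + t b10 + t b11 + t b12 := by decide +kernel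

lemma part1 (C : Submodule (ZMod 3) (Fin 8 → ZMod 3))
    (hC : Module.finrank (ZMod 3) C = 3) : ¬ IsMinimalCode C := by
  intro hmin
  have bC := Module.finBasisOfFinrankEq (ZMod 3) C hC
  set cw : Fin 3 → (Fin 8 → ZMod 3) := fun j => (bC j : Fin 8 → ZMod 3) with hcw
  have hind : LinearIndependent (ZMod 3) cw :=
    bC.linearIndependent.map' C.subtype (Submodule.ker_subtype C)
  have hzero : ∀ v : V3, (∑ j, v j • cw j) = 0 → v = 0 := by
    intro v hv
    funext j
    exact Fintype.linearIndependent_iff.mp hind v hv j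
  have hwC : ∀ v : V3, (∑ j, v j • cw j) ∈ C :=
    fun v => Submodule.sum_smul_mem C v (fun j _ => (bC j).2)
  have hwne : ∀ v : V3, v ≠ 0 → (∑ j, v j • cw j) ≠ 0 := fun v hv h => hv (hzero v h)
  set g : Fin 8 → V3 := fun k j => cw j k with hg
  have happ : ∀ (v : V3) (k : Fin 8), (∑ j, v j • cw j) k = dot v (g k) := by
    intro v k
    simp [Finset.sum_apply, Fin.sum_univ_three, dot, g]
  set P : Finset V3 := (Finset.univ.filter (fun k : Fin 8 => g k ≠ 0)).image (fun k => nrm (g k)) with hP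
  have hgP : ∀ k : Fin 8, g k ≠ 0 → nrm (g k) ∈ P := fun k h =>
    Finset.mem_image.mpr ⟨k, Finset.mem_filter.mpr ⟨Finset.mem_univ k, h⟩, rfl⟩
  have hP13 : P ⊆ pts13 := by
    intro x hx
    obtain ⟨k, hk, rfl⟩ := Finset.mem_image.mp hx
    exact n1 _ (Finset.mem_filter.mp hk).2
  have hcard : P.card ≤ 8 := by
    refine le_trans Finset.card_image_le (le_trans (Finset.card_filter_le _ _) ?_)
    simp
  have claimA : ∀ u ∈ pts13, 2 ≤ (P.filter fun x => dot u x = 0).card := by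
    intro u hu
    by_contra hlt
    push_neg at hlt
    have hQ1 : ∀ x ∈ P.filter (fun x => dot u x = 0), ∀ y ∈ P.filter (fun x => dot u x = 0), x = y :=
      Finset.card_le_one.mp (by omega)
    obtain ⟨p, hp⟩ : ∃ p : V3, ∀ x ∈ P.filter (fun x => dot u x = 0), x = p := by
      rcases Finset.eq_empty_or_nonempty (P.filter (fun x => dot u x = 0)) with he | ⟨q, hq⟩
      · exact ⟨0, fun x hx => absurd hx (by simp [he])⟩
      · exact ⟨q, fun x hx => hQ1 x hx q hq⟩
    have hu0 : u ≠ 0 := (Finset.mem_filter.mp hu).2.2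
    have hcol : ∀ k : Fin 8, g k ≠ 0 → nrm (g k) = p := by
      intro k0 hk0
      obtain ⟨v, hv0, hvp, hvq⟩ := e1 p (g k0)
      have hsupp : {i | (∑ j, v j • cw j) i ≠ 0} ⊆ {i | (∑ j, u j • cw j) i ≠ 0} := by
        intro k hk
        simp only [Set.mem_setOf_eq, happ] at hk ⊢
        intro hdu
        rcases eq_or_ne (g k) 0 with hgk | hgk
        · exact hk (by rw [hgk]; exact dotz v)
        · have hmem : nrm (g k) ∈ P.filter (fun x => dot u x = 0) :=
            Finset.mem_filter.mpr ⟨hgP k hgk, (n2 u (g k) hgk).mpr hdu⟩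
          have hnp := hp _ hmem
          exact hk ((n2 v (g k) hgk).mp (by rw [hnp]; exact hvp))
      have heq := hmin _ (hwC u) (hwne u hu0) _ (hwC v) (hwne v hv0) hsupp
      have hk0' : dot u (g k0) = 0 := by
        by_contra hne
        have hmem : (k0 : Fin 8) ∈ {i | (∑ j, v j • cw j) i ≠ 0} := by
          rw [heq]
          simp only [Set.mem_setOf_eq, happ]
          exact hne
        simp only [Set.mem_setOf_eq, happ] at hmem
        exact hmem hvq
      exact hp _ (Finset.mem_filter.mpr ⟨hgP k0 hk0, (n2 u (g k0) hk0).mpr hk0'⟩)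
    obtain ⟨v1, hv10, hv1p, _⟩ := e1 p p
    apply hwne v1 hv10
    funext k
    simp only [Pi.zero_apply]
    rw [happ]
    rcases eq_or_ne (g k) 0 with hgk | hgk
    · rw [hgk]; exact dotz v1
    · exact (n2 v1 (g k) hgk).mp (by rw [hcol k hgk]; exact hv1p)
  have H0 : 2 ≤ t (decide (enc 1 ∈ P)) + t (decide (enc 4 ∈ P)) + t (decide (enc 7 ∈ P)) + t (decide (enc 10 ∈ P)) := by
    have h2 := claimA (enc 0) (by decide)
    have hsub : P.filter (fun x => dot (enc 0) x = 0) ⊆ {enc 1, enc 4, enc 7, enc 10} := by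
      intro x hx
      have hx' := Finset.mem_filter.mp hx
      exact (by decide : ∀ x : V3, x ∈ pts13 → dot (enc 0) x = 0 → x ∈ ({enc 1, enc 4, enc 7, enc 10} : Finset V3)) x (hP13 hx'.1) hx'.2
    have h3 := card_le_four hsub
    rw [tb 0 1 P (by decide), tb 0 4 P (by decide), tb 0 7 P (by decide), tb 0 10 P (by decide)] at h3
    omega
  have H1 : 2 ≤ t (decide (enc 0 ∈ P)) + t (decide (enc 4 ∈ P)) + t (decide (enc 5 ∈ P)) + t (decide (enc 6 ∈ P)) := by
    have h2 := claimA (enc 1) (by decide)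
    have hsub : P.filter (fun x => dot (enc 1) x = 0) ⊆ {enc 0, enc 4, enc 5, enc 6} := by
      intro x hx
      have hx' := Finset.mem_filter.mp hx
      exact (by decide : ∀ x : V3, x ∈ pts13 → dot (enc 1) x = 0 → x ∈ ({enc 0, enc 4, enc 5, enc 6} : Finset V3)) x (hP13 hx'.1) hx'.2
    have h3 := card_le_four hsub
    rw [tb 1 0 P (by decide), tb 1 4 P (by decide), tb 1 5 P (by decide), tb 1 6 P (by decide)] at h3
    omega
  have H2 : 2 ≤ t (decide (enc 3 ∈ P)) + t (decide (enc 4 ∈ P)) + t (decide (enc 9 ∈ P)) + t (decide (enc 11 ∈ P)) := by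
    have h2 := claimA (enc 2) (by decide)
    have hsub : P.filter (fun x => dot (enc 2) x = 0) ⊆ {enc 3, enc 4, enc 9, enc 11} := by
      intro x hx
      have hx' := Finset.mem_filter.mp hx
      exact (by decide : ∀ x : V3, x ∈ pts13 → dot (enc 2) x = 0 → x ∈ ({enc 3, enc 4, enc 9, enc 11} : Finset V3)) x (hP13 hx'.1) hx'.2
    have h3 := card_le_four hsub
    rw [tb 2 3 P (by decide), tb 2 4 P (by decide), tb 2 9 P (by decide), tb 2 11 P (by decide)] at h3
    omega
  have H3 : 2 ≤ t (decide (enc 2 ∈ P)) + t (decide (enc 4 ∈ P)) + t (decide (enc 8 ∈ P)) + t (decide (enc 12 ∈ P)) := by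
    have h2 := claimA (enc 3) (by decide)
    have hsub : P.filter (fun x => dot (enc 3) x = 0) ⊆ {enc 2, enc 4, enc 8, enc 12} := by
      intro x hx
      have hx' := Finset.mem_filter.mp hx
      exact (by decide : ∀ x : V3, x ∈ pts13 → dot (enc 3) x = 0 → x ∈ ({enc 2, enc 4, enc 8, enc 12} : Finset V3)) x (hP13 hx'.1) hx'.2
    have h3 := card_le_four hsub
    rw [tb 3 2 P (by decide), tb 3 4 P (by decide), tb 3 8 P (by decide), tb 3 12 P (by decide)] at h3
    omega
  have H4 : 2 ≤ t (decide (enc 0 ∈ P)) + t (decide (enc 1 ∈ P)) + t (decide (enc 2 ∈ P)) + t (decide (enc 3 ∈ P)) := by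
    have h2 := claimA (enc 4) (by decide)
    have hsub : P.filter (fun x => dot (enc 4) x = 0) ⊆ {enc 0, enc 1, enc 2, enc 3} := by
      intro x hx
      have hx' := Finset.mem_filter.mp hx
      exact (by decide : ∀ x : V3, x ∈ pts13 → dot (enc 4) x = 0 → x ∈ ({enc 0, enc 1, enc 2, enc 3} : Finset V3)) x (hP13 hx'.1) hx'.2
    have h3 := card_le_four hsub
    rw [tb 4 0 P (by decide), tb 4 1 P (by decide), tb 4 2 P (by decide), tb 4 3 P (by decide)] at h3
    omega
  have H5 : 2 ≤ t (decide (enc 1 ∈ P)) + t (decide (enc 6 ∈ P)) + t (decide (enc 9 ∈ P)) + t (decide (enc 12 ∈ P)) := by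
    have h2 := claimA (enc 5) (by decide)
    have hsub : P.filter (fun x => dot (enc 5) x = 0) ⊆ {enc 1, enc 6, enc 9, enc 12} := by
      intro x hx
      have hx' := Finset.mem_filter.mp hx
      exact (by decide : ∀ x : V3, x ∈ pts13 → dot (enc 5) x = 0 → x ∈ ({enc 1, enc 6, enc 9, enc 12} : Finset V3)) x (hP13 hx'.1) hx'.2
    have h3 := card_le_four hsub
    rw [tb 5 1 P (by decide), tb 5 6 P (by decide), tb 5 9 P (by decide), tb 5 12 P (by decide)] at h3
    omega
  have H6 : 2 ≤ t (decide (enc 1 ∈ P)) + t (decide (enc 5 ∈ P)) + t (decide (enc 8 ∈ P)) + t (decide (enc 11 ∈ P)) := by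
    have h2 := claimA (enc 6) (by decide)
    have hsub : P.filter (fun x => dot (enc 6) x = 0) ⊆ {enc 1, enc 5, enc 8, enc 11} := by
      intro x hx
      have hx' := Finset.mem_filter.mp hx
      exact (by decide : ∀ x : V3, x ∈ pts13 → dot (enc 6) x = 0 → x ∈ ({enc 1, enc 5, enc 8, enc 11} : Finset V3)) x (hP13 hx'.1) hx'.2
    have h3 := card_le_four hsub
    rw [tb 6 1 P (by decide), tb 6 5 P (by decide), tb 6 8 P (by decide), tb 6 11 P (by decide)] at h3
    omega
  have H7 : 2 ≤ t (decide (enc 0 ∈ P)) + t (decide (enc 10 ∈ P)) + t (decide (enc 11 ∈ P)) + t (decide (enc 12 ∈ P)) := by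
    have h2 := claimA (enc 7) (by decide)
    have hsub : P.filter (fun x => dot (enc 7) x = 0) ⊆ {enc 0, enc 10, enc 11, enc 12} := by
      intro x hx
      have hx' := Finset.mem_filter.mp hx
      exact (by decide : ∀ x : V3, x ∈ pts13 → dot (enc 7) x = 0 → x ∈ ({enc 0, enc 10, enc 11, enc 12} : Finset V3)) x (hP13 hx'.1) hx'.2
    have h3 := card_le_four hsub
    rw [tb 7 0 P (by decide), tb 7 10 P (by decide), tb 7 11 P (by decide), tb 7 12 P (by decide)] at h3
    omega
  have H8 : 2 ≤ t (decide (enc 3 ∈ P)) + t (decide (enc 6 ∈ P)) + t (decide (enc 8 ∈ P)) + t (decide (enc 10 ∈ P)) := by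
    have h2 := claimA (enc 8) (by decide)
    have hsub : P.filter (fun x => dot (enc 8) x = 0) ⊆ {enc 3, enc 6, enc 8, enc 10} := by
      intro x hx
      have hx' := Finset.mem_filter.mp hx
      exact (by decide : ∀ x : V3, x ∈ pts13 → dot (enc 8) x = 0 → x ∈ ({enc 3, enc 6, enc 8, enc 10} : Finset V3)) x (hP13 hx'.1) hx'.2
    have h3 := card_le_four hsub
    rw [tb 8 3 P (by decide), tb 8 6 P (by decide), tb 8 8 P (by decide), tb 8 10 P (by decide)] at h3
    omega
  have H9 : 2 ≤ t (decide (enc 2 ∈ P)) + t (decide (enc 5 ∈ P)) + t (decide (enc 9 ∈ P)) + t (decide (enc 10 ∈ P)) := by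
    have h2 := claimA (enc 9) (by decide)
    have hsub : P.filter (fun x => dot (enc 9) x = 0) ⊆ {enc 2, enc 5, enc 9, enc 10} := by
      intro x hx
      have hx' := Finset.mem_filter.mp hx
      exact (by decide : ∀ x : V3, x ∈ pts13 → dot (enc 9) x = 0 → x ∈ ({enc 2, enc 5, enc 9, enc 10} : Finset V3)) x (hP13 hx'.1) hx'.2
    have h3 := card_le_four hsub
    rw [tb 9 2 P (by decide), tb 9 5 P (by decide), tb 9 9 P (by decide), tb 9 10 P (by decide)] at h3
    omega
  have H10 : 2 ≤ t (decide (enc 0 ∈ P)) + t (decide (enc 7 ∈ P)) + t (decide (enc 8 ∈ P)) + t (decide (enc 9 ∈ P)) := by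
    have h2 := claimA (enc 10) (by decide)
    have hsub : P.filter (fun x => dot (enc 10) x = 0) ⊆ {enc 0, enc 7, enc 8, enc 9} := by
      intro x hx
      have hx' := Finset.mem_filter.mp hx
      exact (by decide : ∀ x : V3, x ∈ pts13 → dot (enc 10) x = 0 → x ∈ ({enc 0, enc 7, enc 8, enc 9} : Finset V3)) x (hP13 hx'.1) hx'.2
    have h3 := card_le_four hsub
    rw [tb 10 0 P (by decide), tb 10 7 P (by decide), tb 10 8 P (by decide), tb 10 9 P (by decide)] at h3
    omega
  have H11 : 2 ≤ t (decide (enc 2 ∈ P)) + t (decide (enc 6 ∈ P)) + t (decide (enc 7 ∈ P)) + t (decide (enc 11 ∈ P)) := by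
    have h2 := claimA (enc 11) (by decide)
    have hsub : P.filter (fun x => dot (enc 11) x = 0) ⊆ {enc 2, enc 6, enc 7, enc 11} := by
      intro x hx
      have hx' := Finset.mem_filter.mp hx
      exact (by decide : ∀ x : V3, x ∈ pts13 → dot (enc 11) x = 0 → x ∈ ({enc 2, enc 6, enc 7, enc 11} : Finset V3)) x (hP13 hx'.1) hx'.2
    have h3 := card_le_four hsub
    rw [tb 11 2 P (by decide), tb 11 6 P (by decide), tb 11 7 P (by decide), tb 11 11 P (by decide)] at h3
    omega
  have H12 : 2 ≤ t (decide (enc 3 ∈ P)) + t (decide (enc 5 ∈ P)) + t (decide (enc 7 ∈ P)) + t (decide (enc 12 ∈ P)) := by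
    have h2 := claimA (enc 12) (by decide)
    have hsub : P.filter (fun x => dot (enc 12) x = 0) ⊆ {enc 3, enc 5, enc 7, enc 12} := by
      intro x hx
      have hx' := Finset.mem_filter.mp hx
      exact (by decide : ∀ x : V3, x ∈ pts13 → dot (enc 12) x = 0 → x ∈ ({enc 3, enc 5, enc 7, enc 12} : Finset V3)) x (hP13 hx'.1) hx'.2
    have h3 := card_le_four hsub
    rw [tb 12 3 P (by decide), tb 12 5 P (by decide), tb 12 7 P (by decide), tb 12 12 P (by decide)] at h3
    omega
  have hPeq : P = ({enc 0, enc 1, enc 2, enc 3, enc 4, enc 5, enc 6, enc 7, enc 8, enc 9, enc 10, enc 11, enc 12} : Finset V3).filter (· ∈ P) := by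
    ext x
    simp only [Finset.mem_filter]
    exact ⟨fun h => ⟨pts13sub x (hP13 h), h⟩, fun h => h.2⟩
  have hccard : P.card = t (decide (enc 0 ∈ P)) + (t (decide (enc 1 ∈ P)) + (t (decide (enc 2 ∈ P)) + (t (decide (enc 3 ∈ P)) + (t (decide (enc 4 ∈ P)) + (t (decide (enc 5 ∈ P)) + (t (decide (enc 6 ∈ P)) + (t (decide (enc 7 ∈ P)) + (t (decide (enc 8 ∈ P)) + (t (decide (enc 9 ∈ P)) + (t (decide (enc 10 ∈ P)) + (t (decide (enc 11 ∈ P)) + (t (decide (enc 12 ∈ P)))))))))))))) := by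
    conv_lhs => rw [hPeq]
    rw [step_eq (enc 0) _ (by decide) (· ∈ P), step_eq (enc 1) _ (by decide) (· ∈ P), step_eq (enc 2) _ (by decide) (· ∈ P), step_eq (enc 3) _ (by decide) (· ∈ P), step_eq (enc 4) _ (by decide) (· ∈ P), step_eq (enc 5) _ (by decide) (· ∈ P), step_eq (enc 6) _ (by decide) (· ∈ P), step_eq (enc 7) _ (by decide) (· ∈ P), step_eq (enc 8) _ (by decide) (· ∈ P), step_eq (enc 9) _ (by decide) (· ∈ P), step_eq (enc 10) _ (by decide) (· ∈ P), step_eq (enc 11) _ (by decide) (· ∈ P), sing_eq (enc 12) (· ∈ P)]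
  have h9 := arcB _ _ _ _ _ _ _ _ _ _ _ _ _ H0 H1 H2 H3 H4 H5 H6 H7 H8 H9 H10 H11 H12
  omega


def rows : Fin 3 → (Fin 9 → ZMod 3) := ![![0,0,0,0,1,1,1,1,1], ![0,1,1,1,0,0,0,1,2], ![1,0,1,2,0,1,2,2,2]]

lemma hsetEq : code9 = Submodule.span (ZMod 3) (Set.range rows) := by
  rw [code9]; congr 1
  ext x
  simp only [rows, Matrix.range_cons, Matrix.range_empty, Set.union_empty, Set.mem_insert_iff,
    Set.mem_union, Set.mem_singleton_iff]

lemma hindep : LinearIndependent (ZMod 3) rows := Fintype.linearIndependent_iff.mpr (by decide)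

lemma rk9 : Module.finrank (ZMod 3) code9 = 3 := by
  rw [hsetEq, finrank_span_eq_card hindep]; simp

set_option synthInstance.maxSize 1000 in
lemma key9 : ∀ x y : Fin 3 → ZMod 3, (∑ i, x i • rows i) ≠ 0 → (∑ i, y i • rows i) ≠ 0 →
    (∀ k, (∑ i, y i • rows i) k ≠ 0 → (∑ i, x i • rows i) k ≠ 0) →
    ∀ k, (∑ i, x i • rows i) k ≠ 0 → (∑ i, y i • rows i) k ≠ 0 := by decide

lemma code9_minimal : IsMinimalCode code9 := by
  intro c hc hc0 u hu hu0 hsub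
  rw [hsetEq, Submodule.mem_span_range_iff_exists_fun] at hc hu
  obtain ⟨x, hx⟩ := hc
  obtain ⟨y, hy⟩ := hu
  subst hx; subst hy
  ext k
  simp only [Set.mem_setOf_eq]
  exact ⟨fun h => hsub h, fun h => key9 x y hc0 hu0 (fun k hk => hsub hk) k h⟩

theorem minimal_dim_three :
    (∀ C : Submodule (ZMod 3) (Fin 8 → ZMod 3),
      Module.finrank (ZMod 3) C = 3 → ¬ IsMinimalCode C) ∧
    Module.finrank (ZMod 3) code9 = 3 ∧
    IsMinimalCode code9 := by
  exact ⟨part1, rk9, code9_minimal⟩
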